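/- Behavior cloning compounding error: Suppose a learned policy π, executed for T steps, makes a mistake at each step t with probability at most ε whenever all previous steps were mistake-free, but once a mistake has occurred the policy may err at every subsequent step (probability of mistake bounded by 1). Then the expected total number of mistakes over T steps is at most εT², i.e., ℓ(π) ≤ ε·T². -/

import Mathlib

open MeasureTheory Finset

/-!
If some mistake occurs before step `t`, there is a first one, at a step `s < t` reached
mistake-free; by hypothesis each such event has probability at most `ε`, so a union bound gives
`P(some mistake before t) ≤ t ε`. In particular every single step errs with probability at most
`T ε`, and summing over the `T` steps bounds the expected number of mistakes by `ε T²`.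
-/

section

variable {α : Type*}

theorem exists_lt_mem_iff_exists_first (E : ℕ → Set α) (t : ℕ) (ω : α) :
    (∃ s < t, ω ∈ E s) ↔ ∃ s < t, ω ∈ E s ∩ {ω | ∀ r < s, ω ∉ E r} := by
  refine ⟨fun h => ?_, fun ⟨s, hs, hω, _⟩ => ⟨s, hs, hω⟩⟩
  classical
  obtain ⟨hst, hωs⟩ := Nat.find_spec h
  exact ⟨Nat.find h, hst, hωs, fun r hrs hωr => Nat.find_min h hrs ⟨hrs.trans hst, hωr⟩⟩

theorem measure_biUnion_range_le_of_first {_ : MeasurableSpace α} (μ : Measure α)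
    [IsProbabilityMeasure μ] (E : ℕ → Set α) (ε : ENNReal) (t : ℕ)
    (hfirst : ∀ s < t, μ (E s ∩ {ω | ∀ r < s, ω ∉ E r}) ≤ ε * μ {ω | ∀ r < s, ω ∉ E r}) :
    μ (⋃ s ∈ range t, E s) ≤ t * ε := by
  have hunion : (⋃ s ∈ range t, E s) = ⋃ s ∈ range t, E s ∩ {ω | ∀ r < s, ω ∉ E r} := by
    ext ω
    simpa only [Set.mem_iUnion, mem_range, exists_prop] using
      exists_lt_mem_iff_exists_first E t ω
  calc μ (⋃ s ∈ range t, E s)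
      ≤ ∑ s ∈ range t, μ (E s ∩ {ω | ∀ r < s, ω ∉ E r}) :=
        hunion ▸ measure_biUnion_finset_le _ _
    _ ≤ ∑ _s ∈ range t, ε := by
        refine sum_le_sum fun s hs => (hfirst s (mem_range.mp hs)).trans ?_
        exact mul_le_of_le_one_right' prob_le_one
    _ = t * ε := by rw [sum_const, card_range, nsmul_eq_mul]

theorem eq_indicator_one_of_forall_eq_zero_or_one {f : α → ℝ} (h01 : ∀ ω, f ω = 0 ∨ f ω = 1) :
    f = {ω | f ω = 1}.indicator 1 := by
  ext ω
  rcases h01 ω with h | h <;> simp [h]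

section ZeroOne

variable {_ : MeasurableSpace α} (μ : Measure α) {f : α → ℝ}

theorem integrable_of_forall_eq_zero_or_one [IsFiniteMeasure μ] (hf : Measurable f)
    (h01 : ∀ ω, f ω = 0 ∨ f ω = 1) : Integrable f μ := by
  rw [eq_indicator_one_of_forall_eq_zero_or_one h01]
  exact (integrable_const 1).indicator (hf (measurableSet_singleton 1))

theorem integral_eq_measureReal_of_forall_eq_zero_or_one (hf : Measurable f)
    (h01 : ∀ ω, f ω = 0 ∨ f ω = 1) : ∫ ω, f ω ∂μ = μ.real {ω | f ω = 1} := by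
  conv_lhs => rw [eq_indicator_one_of_forall_eq_zero_or_one h01]
  exact integral_indicator_one (hf (measurableSet_singleton 1))

end ZeroOne

end

/-- Behavior cloning compounding error: if the policy makes a mistake at step `t`
with (conditional) probability at most `ε` whenever all previous steps were
mistake-free, then the expected total number of mistakes over `T` steps is at
most `ε·T²`. -/
theorem bc_compounding_error
    {Ω : Type*} [MeasurableSpace Ω] (μ : Measure Ω) [IsProbabilityMeasure μ]
    (T : ℕ) (ε : ℝ) (hε : 0 ≤ ε)
    (M : ℕ → Ω → ℝ)
    (hMmeas : ∀ t, Measurable (M t))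
    (hM01 : ∀ t ω, M t ω = 0 ∨ M t ω = 1)
    (hcond : ∀ t < T,
      μ ({ω | M t ω = 1} ∩ {ω | ∀ s < t, M s ω = 0})
        ≤ ENNReal.ofReal ε * μ {ω | ∀ s < t, M s ω = 0}) :
    ∫ ω, (∑ t ∈ Finset.range T, M t ω) ∂μ ≤ ε * (T : ℝ) ^ 2 := by
  set E : ℕ → Set Ω := fun t => {ω | M t ω = 1}
  have hmistakeFree : ∀ t, {ω | ∀ s < t, M s ω = 0} = {ω | ∀ s < t, ω ∉ E s} := by
    intro t
    ext ω
    refine forall₂_congr fun s _ => ?_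
    rcases hM01 s ω with h | h <;> simp [E, h]
  have hstep : ∀ t < T, μ (E t) ≤ ENNReal.ofReal (T * ε) := by
    intro t ht
    calc μ (E t) ≤ μ (⋃ s ∈ range T, E s) :=
          measure_mono (Set.subset_biUnion_of_mem (mem_range.mpr ht))
      _ ≤ T * ENNReal.ofReal ε :=
          measure_biUnion_range_le_of_first μ E _ T fun s hs => hmistakeFree s ▸ hcond s hs
      _ = ENNReal.ofReal (T * ε) := by
          rw [ENNReal.ofReal_mul (Nat.cast_nonneg T), ENNReal.ofReal_natCast]
  calc ∫ ω, (∑ t ∈ range T, M t ω) ∂μ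
      = ∑ t ∈ range T, μ.real (E t) := by
        rw [integral_finsetSum _ fun t _ =>
          integrable_of_forall_eq_zero_or_one μ (hMmeas t) (hM01 t)]
        exact sum_congr rfl fun t _ =>
          integral_eq_measureReal_of_forall_eq_zero_or_one μ (hMmeas t) (hM01 t)
    _ ≤ ∑ _t ∈ range T, (T * ε) := sum_le_sum fun t ht =>
        ENNReal.toReal_le_of_le_ofReal (by positivity) (hstep t (mem_range.mp ht))
    _ = ε * (T : ℝ) ^ 2 := by rw [sum_const, card_range, nsmul_eq_mul]; ring
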